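/- Let (d; m) ∈ 𝓔. Then: (i) μ(d;m)(a) ≤ (1+c)λ·√(1 + 1/d²); (ii) μ(d;m)(a) > (1+c)λ if and only if ε·w(a) > 0 (Euclidean inner product); (iii) if μ(d;m)(a) > (1+c)λ, then Σ_i ε_i² < 1; (iv) −Σ_i ε_i = 1 + (d/((1+c)λ))·(y(a) − 1/q), where y(a) := a + 1 − 2(1+c)λ. -/
import Mathlib

/-- The (unnormalized) weight expansion of a pair of natural numbers, via the Euclidean
algorithm: for `a = p/q` the normalized weight sequence `W(a) = (a_1, …, a_M)` of the
continued-fraction expansion `a = [ℓ_0; ℓ_1, …, ℓ_k]` (i.e. `X_0 = 1` repeated `ℓ_0`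
times, then `X_1` repeated `ℓ_1` times, …) is `(wseq p q).map (fun x => (x : ℝ) / q)`. -/
def wseq : ℕ → ℕ → List ℕ
  | _, 0 => []
  | x, y + 1 =>
    if h : y + 1 ≤ x then (y + 1) :: wseq (x - (y + 1)) (y + 1)
    else wseq (y + 1) x
  termination_by x y => x + 2 * y
  decreasing_by all_goals omega

lemma wseq_sq_sum (x y : ℕ) : ((wseq x y).map (fun t => t ^ 2)).sum = x * y := by
  induction x, y using wseq.induct with
  | case1 x => simp [wseq]
  | case2 x y h ih =>
    rw [wseq]; simp only [h, dite_true, List.map_cons, List.sum_cons, ih,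
      Nat.succ_eq_add_one]
    nlinarith [Nat.sub_add_cancel h]
  | case3 x y h ih =>
    rw [wseq]; simp only [h, dite_false, ih, Nat.succ_eq_add_one]; ring

lemma wseq_sum (x y : ℕ) : (wseq x y).sum + Nat.gcd x y = x + y := by
  induction x, y using wseq.induct with
  | case1 x => simp [wseq]
  | case2 x y h ih =>
    rw [wseq]
    simp only [h, dite_true, List.sum_cons, Nat.succ_eq_add_one]
    rw [Nat.gcd_comm, ← Nat.gcd_sub_self_right h]
    have := Nat.gcd_comm (x - (y + 1)) (y + 1)
    omega
  | case3 x y h ih =>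
    rw [wseq]; simp only [h, dite_false, Nat.succ_eq_add_one]
    rw [Nat.gcd_comm]; omega

lemma zip_sub_sum (t : ℝ) : ∀ (x y : List ℝ), x.length = y.length →
    (List.zipWith (fun a b => a - t * b) x y).sum = x.sum - t * y.sum
  | [], [], _ => by simp
  | a :: x, b :: y, h => by
    simp only [List.zipWith_cons_cons, List.sum_cons,
      zip_sub_sum t x y (by simpa using h)]
    ring

lemma zip_dot_sub (t : ℝ) : ∀ (x y : List ℝ), x.length = y.length →
    (List.zipWith (fun e b => e * b) (List.zipWith (fun a b => a - t * b) x y) y).sum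
      = (List.zipWith (fun a b => a * b) x y).sum - t * (y.map (fun b => b ^ 2)).sum
  | [], [], _ => by simp
  | a :: x, b :: y, h => by
    simp only [List.zipWith_cons_cons, List.sum_cons, List.map_cons,
      zip_dot_sub t x y (by simpa using h)]
    ring

lemma zip_sub_sq (t : ℝ) : ∀ (x y : List ℝ), x.length = y.length →
    ((List.zipWith (fun a b => a - t * b) x y).map (fun e => e ^ 2)).sum
      = (x.map (fun e => e ^ 2)).sum - 2 * t * (List.zipWith (fun a b => a * b) x y).sum
        + t ^ 2 * (y.map (fun e => e ^ 2)).sum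
  | [], [], _ => by simp
  | a :: x, b :: y, h => by
    simp only [List.zipWith_cons_cons, List.sum_cons, List.map_cons,
      zip_sub_sq t x y (by simpa using h)]
    ring

lemma sq_sum_nonneg (x : List ℝ) : 0 ≤ (x.map (fun e => e ^ 2)).sum :=
  List.sum_nonneg (by
    intro v hv; simp only [List.mem_map] at hv; obtain ⟨u, _, rfl⟩ := hv; positivity)

lemma cs_step (A B S a b : ℝ) (hx : 0 ≤ A) (hy : 0 ≤ B) (ih : S ^ 2 ≤ A * B) :
    (a * b + S) ^ 2 ≤ (a ^ 2 + A) * (b ^ 2 + B) := by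
  rcases eq_or_lt_of_le hy with hB | hB
  · subst hB
    have hS : S = 0 := by nlinarith [sq_nonneg S]
    subst hS
    nlinarith [mul_nonneg hx (sq_nonneg b)]
  · nlinarith [sq_nonneg (a * B - b * S),
      mul_nonneg (sq_nonneg b) (sub_nonneg.2 ih), hB, mul_pos hB hB]

lemma list_cs : ∀ (x y : List ℝ),
    ((List.zipWith (fun a b => a * b) x y).sum) ^ 2
      ≤ (x.map (fun e => e ^ 2)).sum * (y.map (fun e => e ^ 2)).sum
  | [], y => by simpa using mul_nonneg (le_refl (0 : ℝ)) (sq_sum_nonneg y)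
  | a :: x, [] => by simp
  | a :: x, b :: y => by
    have ih := list_cs x y
    simp only [List.zipWith_cons_cons, List.sum_cons, List.map_cons]
    exact cs_step _ _ _ a b (sq_sum_nonneg x) (sq_sum_nonneg y) ih

lemma sum_map_div (l : List ℕ) (r : ℝ) :
    (l.map (fun t : ℕ => (t : ℝ) / r)).sum = (l.sum : ℝ) / r := by
  induction l with
  | nil => simp
  | cons h t ih =>
    simp only [List.map_cons, List.sum_cons, ih]
    push_cast
    ring

lemma sum_map_sq_div (l : List ℕ) (r : ℝ) :
    (l.map (fun t : ℕ => ((t : ℝ) / r) ^ 2)).sum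
      = (((l.map (fun t => t ^ 2)).sum : ℕ) : ℝ) / r ^ 2 := by
  induction l with
  | nil => simp
  | cons h t ih =>
    simp only [List.map_cons, List.sum_cons, ih]
    push_cast
    rw [add_div, div_pow]

lemma cast_sq_sum (l : List ℕ) :
    ((l.map (fun n : ℕ => (n : ℝ))).map (fun e => e ^ 2)).sum
      = (((l.map (fun t => t ^ 2)).sum : ℕ) : ℝ) := by
  induction l with
  | nil => simp
  | cons h t ih =>
    simp only [List.map_cons, List.sum_cons, ih]
    push_cast
    ring

theorem key_lemma_21
    (p q : ℕ) (hp : 0 < p) (hq : 0 < q) (hpq : Nat.Coprime p q)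
    (a : ℝ) (ha : a = (p : ℝ) / q) (ha1 : 1 < a)
    (c : ℝ) (hc : 1 ≤ c)
    (lam : ℝ) (hlam : lam = Real.sqrt (a / (2 * c)))
    (w : List ℝ) (hw : w = c * lam :: lam :: (wseq p q).map (fun x => (x : ℝ) / q))
    (d : ℕ) (hd : 0 < d)
    (m : List ℕ) (hmlen : m.length = w.length)
    (hE1 : (m.map (fun x => x ^ 2)).sum = d ^ 2 + 1)
    (hE2 : (m.sum : ℤ) = 3 * (d : ℤ) - 1)
    (mu : ℝ) (hmu : mu = (List.zipWith (fun (mi : ℕ) (wi : ℝ) => (mi : ℝ) * wi) m w).sum / d)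
    (eps : List ℝ)
    (heps : eps = List.zipWith
      (fun (mi : ℕ) (wi : ℝ) => (mi : ℝ) - (d : ℝ) / ((1 + c) * lam) * wi) m w)
    (y : ℝ) (hy : y = a + 1 - 2 * (1 + c) * lam) :
    mu ≤ (1 + c) * lam * Real.sqrt (1 + 1 / (d : ℝ) ^ 2) ∧
    ((1 + c) * lam < mu ↔ 0 < (List.zipWith (fun e wi => e * wi) eps w).sum) ∧
    ((1 + c) * lam < mu → (eps.map (fun e => e ^ 2)).sum < 1) ∧
    (-eps.sum = 1 + (d : ℝ) / ((1 + c) * lam) * (y - 1 / q)) := by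
  have hq0 : (0 : ℝ) < q := by exact_mod_cast hq
  have hc0 : (0 : ℝ) < c := lt_of_lt_of_le one_pos hc
  have ha0 : (0 : ℝ) < a := lt_trans one_pos ha1
  have hlam2 : lam ^ 2 = a / (2 * c) := by
    rw [hlam, sq, Real.mul_self_sqrt (by positivity)]
  have hlampos : 0 < lam := by
    rw [hlam]; exact Real.sqrt_pos.2 (by positivity)
  set L : ℝ := (1 + c) * lam with hLdef
  have hL : 0 < L := by positivity
  have hL0 : L ≠ 0 := ne_of_gt hL
  set K : ℝ := (d : ℝ) / L with hKdef
  have hd0 : (0 : ℝ) < d := by exact_mod_cast hd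
  have hKL : K * L = (d : ℝ) := div_mul_cancel₀ _ hL0
  have hK0 : 0 < K := div_pos hd0 hL
  -- normalize the coerced weight list
  have hs : ((wseq p q).map (fun x => (x : ℝ) / q) : List ℝ)
      = (wseq p q).map (fun x : ℕ => (x : ℝ) / q) := by
    generalize wseq p q = l
    induction l with
    | nil => rfl
    | cons h t ih => simpa using ih
  rw [hs] at hw
  -- sum of squares of w
  have hwsq : (w.map (fun e => e ^ 2)).sum = L ^ 2 := by
    rw [hw]
    simp only [List.map_cons, List.sum_cons, List.map_map]
    have : ((fun e : ℝ => e ^ 2) ∘ fun x : ℕ => (x : ℝ) / q)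
        = fun t : ℕ => ((t : ℝ) / q) ^ 2 := rfl
    rw [this, sum_map_sq_div, wseq_sq_sum]
    push_cast
    have e1 : (p : ℝ) * q / (q : ℝ) ^ 2 = a := by
      rw [ha]; field_simp
    have hlam2' : 2 * c * lam ^ 2 = a := by
      rw [hlam2]; field_simp
    rw [e1, hLdef]
    linear_combination (-1 : ℝ) * hlam2'
  -- sum of w
  have hwsum : w.sum = L + a + 1 - 1 / q := by
    rw [hw]
    simp only [List.sum_cons]
    rw [sum_map_div]
    have hgcd : (wseq p q).sum + 1 = p + q := by
      have := wseq_sum p q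
      rwa [hpq] at this
    have : ((wseq p q).sum : ℝ) = (p : ℝ) + q - 1 := by
      have : ((wseq p q).sum : ℝ) + 1 = (p : ℝ) + q := by exact_mod_cast hgcd
      linarith
    rw [this, ha, hLdef]
    field_simp
    ring
  -- the real version of m
  set M : List ℝ := m.map (fun n : ℕ => (n : ℝ)) with hM
  have hMlen : M.length = w.length := by rw [hM, List.length_map]; exact hmlen
  have hMsq : (M.map (fun e => e ^ 2)).sum = (d : ℝ) ^ 2 + 1 := by
    rw [hM, cast_sq_sum, hE1]; push_cast; ring
  have hMsum : M.sum = 3 * (d : ℝ) - 1 := by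
    have hn : m.sum + 1 = 3 * d := by omega
    have hr : ((m.sum : ℕ) : ℝ) + 1 = 3 * (d : ℝ) := by exact_mod_cast hn
    rw [hM, ← Nat.cast_list_sum]
    linarith
  set D : ℝ := (List.zipWith (fun a b => a * b) M w).sum with hD
  have hmuD : mu = D / d := by
    rw [hmu, hD, hM, List.zipWith_map_left]
  have hepsM : eps = List.zipWith (fun a b => a - K * b) M w := by
    rw [heps, hM, List.zipWith_map_left]
  -- Cauchy-Schwarz
  have hCS : D ^ 2 ≤ ((d : ℝ) ^ 2 + 1) * L ^ 2 := by
    have := list_cs M w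
    rwa [hMsq, hwsq] at this
  -- dot of eps with w
  have hdot : (List.zipWith (fun e wi => e * wi) eps w).sum = D - (d : ℝ) * L := by
    rw [hepsM, zip_dot_sub K M w hMlen, ← hD, hwsq]
    have : K * L ^ 2 = (d : ℝ) * L := by
      rw [sq, ← mul_assoc, hKL]
    rw [this]
  -- part (i)
  have hsqrt : Real.sqrt (1 + 1 / (d : ℝ) ^ 2) * d = Real.sqrt ((d : ℝ) ^ 2 + 1) := by
    rw [show (1 : ℝ) + 1 / (d : ℝ) ^ 2 = ((d : ℝ) ^ 2 + 1) / (d : ℝ) ^ 2 by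
        field_simp]
    rw [Real.sqrt_div (by positivity), Real.sqrt_sq hd0.le]
    field_simp
  have part1 : mu ≤ L * Real.sqrt (1 + 1 / (d : ℝ) ^ 2) := by
    rw [hmuD, div_le_iff₀ hd0]
    have h1 : D ≤ Real.sqrt (D ^ 2) := by
      rw [Real.sqrt_sq_eq_abs]; exact le_abs_self D
    have h2 : Real.sqrt (D ^ 2) ≤ Real.sqrt (((d : ℝ) ^ 2 + 1) * L ^ 2) :=
      Real.sqrt_le_sqrt hCS
    rw [Real.sqrt_mul (by positivity) _, Real.sqrt_sq hL.le] at h2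
    calc D ≤ Real.sqrt ((d : ℝ) ^ 2 + 1) * L := le_trans h1 h2
    _ = L * Real.sqrt (1 + 1 / (d : ℝ) ^ 2) * d := by rw [mul_assoc, hsqrt]; ring
  -- part (ii)
  have part2 : (L < mu ↔ 0 < (List.zipWith (fun e wi => e * wi) eps w).sum) := by
    rw [hdot, hmuD, lt_div_iff₀ hd0, sub_pos, mul_comm]
  -- part (iii)
  have hepssq : (eps.map (fun e => e ^ 2)).sum = 2 * (d : ℝ) ^ 2 + 1 - 2 * K * D := by
    rw [hepsM, zip_sub_sq K M w hMlen, ← hD, hMsq, hwsq]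
    have : K ^ 2 * L ^ 2 = (d : ℝ) ^ 2 := by
      rw [← mul_pow, hKL]
    rw [this]; ring
  have part3 : L < mu → (eps.map (fun e => e ^ 2)).sum < 1 := by
    intro h
    have hD' : (d : ℝ) * L < D := by
      rw [hmuD, lt_div_iff₀ hd0] at h; linarith
    have : 2 * (d : ℝ) ^ 2 < 2 * K * D := by
      have h1 : K * ((d : ℝ) * L) < K * D := by
        exact mul_lt_mul_of_pos_left hD' hK0
      have h2 : K * ((d : ℝ) * L) = (d : ℝ) ^ 2 := by
        rw [show K * ((d : ℝ) * L) = (K * L) * d by ring, hKL]; ring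
      linarith
    rw [hepssq]; linarith
  -- part (iv)
  have part4 : -eps.sum = 1 + K * (y - 1 / q) := by
    rw [hepsM, zip_sub_sum K M w hMlen, hMsum, hwsum, hy]
    linear_combination 3 * hKL
  exact ⟨part1, part2, part3, part4⟩
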